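/- Vector-state realisation: with e₀ = (1,0) ∈ ℂ ⊕ h and Ω := U_ξ^{(h)} e₀, one has ⟨e₀, ρ^{(h)}(a) e₀⟩ = ⟨Ω, (χ(a) ⊕ π(a)) Ω⟩ = χ(a) + h·γ(a) for all a ∈ A, where γ(a) = ⟨ξ, (π(a) − χ(a)I)ξ⟩. -/

import Mathlib

open ContinuousLinearMap

noncomputable section Preamble

variable {E F G K : Type*}
  [NormedAddCommGroup E] [InnerProductSpace ℂ E]
  [NormedAddCommGroup F] [InnerProductSpace ℂ F]
  [NormedAddCommGroup G] [InnerProductSpace ℂ G]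
  [NormedAddCommGroup K] [InnerProductSpace ℂ K]

/-- Block operator `[[A, B],[C, D]]` from `E ⊕₂ F` to `G ⊕₂ K`. -/
def blk (A : E →L[ℂ] G) (B : F →L[ℂ] G) (C : E →L[ℂ] K) (D : F →L[ℂ] K) :
    WithLp 2 (E × F) →L[ℂ] WithLp 2 (G × K) :=
  ((WithLp.prodContinuousLinearEquiv 2 ℂ G K).symm : G × K →L[ℂ] WithLp 2 (G × K)) ∘L
    ((A.coprod B).prod (C.coprod D)) ∘L
    ((WithLp.prodContinuousLinearEquiv 2 ℂ E F) : WithLp 2 (E × F) →L[ℂ] E × F)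

/-- Orthogonal projection onto the line `ℂ ξ`, as an operator on `H`. -/
def lineProj {H : Type*} [NormedAddCommGroup H] [InnerProductSpace ℂ H] [CompleteSpace H]
    (ξ : H) : H →L[ℂ] H :=
  (ℂ ∙ ξ).subtypeL ∘L Submodule.orthogonalProjection (ℂ ∙ ξ)

end Preamble

noncomputable section Preamble2

variable {H : Type*} [NormedAddCommGroup H] [InnerProductSpace ℂ H] [CompleteSpace H]

/-- The unitary `U_ξ^{(h)} = [[c, −s*],[s, cQ + Q⊥]]` with `c = √(1 − h‖ξ‖²)`,
`s = √h·|ξ⟩`, `Q` the projection onto `ℂξ`. -/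
def Uop (ξ : H) (hp : ℝ) : WithLp 2 (ℂ × H) →L[ℂ] WithLp 2 (ℂ × H) :=
  blk ((Real.sqrt (1 - hp * ‖ξ‖ ^ 2) : ℂ) • (1 : ℂ →L[ℂ] ℂ))
    (-(ContinuousLinearMap.adjoint (Real.sqrt hp • ContinuousLinearMap.toSpanSingleton ℂ ξ)))
    (Real.sqrt hp • ContinuousLinearMap.toSpanSingleton ℂ ξ)
    ((Real.sqrt (1 - hp * ‖ξ‖ ^ 2) : ℂ) • lineProj ξ + (1 - lineProj ξ))

variable {A : Type*} [NormedRing A] [StarRing A] [CStarRing A]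
  [NormedAlgebra ℂ A] [StarModule ℂ A]

/-- The block-diagonal operator `χ(a) ⊕ π(a)` on `ℂ ⊕ H`. -/
def diagOp (χ : A →⋆ₐ[ℂ] ℂ) (π : A →⋆ₐ[ℂ] (H →L[ℂ] H)) (a : A) :
    WithLp 2 (ℂ × H) →L[ℂ] WithLp 2 (ℂ × H) :=
  blk ((χ a) • (1 : ℂ →L[ℂ] ℂ)) 0 0 (π a)

/-- The quantum random walk generator `ρ^{(h)}(a) = U* (χ(a) ⊕ π(a)) U`. -/
def rhoOp (χ : A →⋆ₐ[ℂ] ℂ) (π : A →⋆ₐ[ℂ] (H →L[ℂ] H)) (ξ : H) (hp : ℝ) (a : A) :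
    WithLp 2 (ℂ × H) →L[ℂ] WithLp 2 (ℂ × H) :=
  ContinuousLinearMap.adjoint (Uop ξ hp) ∘L diagOp χ π a ∘L Uop ξ hp

/-- The scaling operator `diag(h^{-1/2}, I)`. -/
def EhOp (H : Type*) [NormedAddCommGroup H] [InnerProductSpace ℂ H] (hp : ℝ) :
    WithLp 2 (ℂ × H) →L[ℂ] WithLp 2 (ℂ × H) :=
  blk (((Real.sqrt hp)⁻¹ : ℂ) • (1 : ℂ →L[ℂ] ℂ)) 0 0 1

/-- The scaling operator `diag(h^{1/2}, I)`. -/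
def DhOp (H : Type*) [NormedAddCommGroup H] [InnerProductSpace ℂ H] (hp : ℝ) :
    WithLp 2 (ℂ × H) →L[ℂ] WithLp 2 (ℂ × H) :=
  blk ((Real.sqrt hp : ℂ) • (1 : ℂ →L[ℂ] ℂ)) 0 0 1

end Preamble2

/-- vector-state realisation: with `e₀ = (1,0)` and `Ω = U e₀`,
`⟨e₀, ρ^{(h)}(a) e₀⟩ = ⟨Ω, (χ(a) ⊕ π(a)) Ω⟩ = χ(a) + h·γ(a)`. -/
theorem stmt_12 {A : Type*} [NormedRing A] [StarRing A] [CStarRing A]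
    [NormedAlgebra ℂ A] [StarModule ℂ A]
    {H : Type*} [NormedAddCommGroup H] [InnerProductSpace ℂ H] [CompleteSpace H]
    (χ : A →⋆ₐ[ℂ] ℂ) (π : A →⋆ₐ[ℂ] (H →L[ℂ] H)) (ξ : H)
    (hp : ℝ) (hpos : 0 < hp) (hle : hp * ‖ξ‖ ^ 2 ≤ 1)
    (γ : A → ℂ) (hγ : ∀ a, γ a = inner ℂ ξ ((π a - χ a • 1) ξ))
    (e₀ : WithLp 2 (ℂ × H)) (he₀ : e₀ = (WithLp.equiv 2 (ℂ × H)).symm (1, 0))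
    (Ω : WithLp 2 (ℂ × H)) (hΩ : Ω = Uop ξ hp e₀) :
    ∀ a : A,
      (inner ℂ e₀ (rhoOp χ π ξ hp a e₀) : ℂ) = inner ℂ Ω (diagOp χ π a Ω) ∧
      (inner ℂ e₀ (rhoOp χ π ξ hp a e₀) : ℂ) = χ a + (hp : ℂ) * γ a := by
  intro a
  set c : ℝ := Real.sqrt (1 - hp * ‖ξ‖ ^ 2) with hc
  have hc2 : (c : ℝ) ^ 2 = 1 - hp * ‖ξ‖ ^ 2 := Real.sq_sqrt (by linarith)
  have hs2 : Real.sqrt hp * Real.sqrt hp = hp := Real.mul_self_sqrt hpos.le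
  have hΩ1 : Ω.fst = (c : ℂ) := by
    rw [hΩ, he₀]
    show (c : ℂ) • (1:ℂ) +
      (-(ContinuousLinearMap.adjoint (Real.sqrt hp • ContinuousLinearMap.toSpanSingleton ℂ ξ))) 0 = _
    simp
  have hΩ2 : Ω.snd = (Real.sqrt hp : ℂ) • ξ := by
    rw [hΩ, he₀]
    show (Real.sqrt hp • ContinuousLinearMap.toSpanSingleton ℂ ξ) 1 +
      ((c : ℂ) • lineProj ξ + (1 - lineProj ξ)) 0 = _
    simp [ContinuousLinearMap.toSpanSingleton_apply]
  have key : (inner ℂ e₀ (rhoOp χ π ξ hp a e₀) : ℂ) = inner ℂ Ω (diagOp χ π a Ω) := by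
    rw [hΩ]
    simp only [rhoOp, ContinuousLinearMap.comp_apply]
    rw [ContinuousLinearMap.adjoint_inner_right]
  refine ⟨key, key.trans ?_⟩
  have hd1 : (diagOp χ π a Ω).fst = χ a * Ω.fst := by
    show (χ a) • Ω.fst + (0 : H →L[ℂ] ℂ) Ω.snd = _
    simp [smul_eq_mul]
  have hd2 : (diagOp χ π a Ω).snd = π a Ω.snd := by
    show (0 : ℂ →L[ℂ] H) Ω.fst + π a Ω.snd = _
    simp
  rw [WithLp.prod_inner_apply]
  change inner ℂ Ω.fst (diagOp χ π a Ω).fst + inner ℂ Ω.snd (diagOp χ π a Ω).snd = _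
  rw [hd1, hd2, hΩ1, hΩ2]
  have hγ' := hγ a
  simp only [ContinuousLinearMap.sub_apply, ContinuousLinearMap.smul_apply,
    ContinuousLinearMap.one_apply, inner_sub_right, inner_smul_right] at hγ'
  rw [map_smul, inner_smul_left, inner_smul_right]
  have hnorm : (inner ℂ ξ ξ : ℂ) = ((‖ξ‖ : ℝ) ^ 2 : ℝ) := by
    rw [inner_self_eq_norm_sq_to_K]; norm_cast
  have h1 : ((c : ℂ)) * c = 1 - (hp : ℂ) * ((‖ξ‖ ^ 2 : ℝ) : ℂ) := by
    exact_mod_cast congrArg Complex.ofReal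
      (by rw [← hc2]; ring : c * c = 1 - hp * ‖ξ‖ ^ 2)
  have h2 : ((Real.sqrt hp : ℂ)) * (Real.sqrt hp : ℂ) = (hp : ℂ) := by
    exact_mod_cast congrArg Complex.ofReal hs2
  simp only [RCLike.inner_apply] at *
  rw [hγ', hnorm, Complex.conj_ofReal, Complex.conj_ofReal]
  push_cast at h1 h2 ⊢
  linear_combination (χ a) * h1 + (inner ℂ ξ ((π a) ξ) : ℂ) * h2
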